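/- arXiv:1106.3582 — 2 statements merged into one kernel-verified Lean document; each statement's English description precedes it below -/
import Mathlib

section
/- Let n be a natural number, C : Fin n → Fin n → ℝ a cost matrix with interest matrix ψ (ψ i j = true iff C i j < 0), and k : Fin n → ℕ a degree sequence. Then a graph x on n nodes is pairwise stable with respect to C and has degree sequence k (i.e., for every node i, the number of nodes j ≠ i with x i j = true equals k i) if and only if for all pairs i ≠ j the constraints (ψ i j) + (ψ j i) − 1 ≤ x i j, x i j ≤ ψ i j, x i j ≤ ψ j i, and x i j = x j i all hold (reading true as 1, false as 0), and for every i the sum over j ≠ i of x i j equals k i. -/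
/-- A graph on `n` nodes: a symmetric, irreflexive Boolean matrix. -/
def IsGraph {n : ℕ} (x : Fin n → Fin n → Bool) : Prop :=
  (∀ i j, x i j = x j i) ∧ ∀ i, x i i = false

/-- Pairwise stability of the graph `x` with respect to the cost matrix `C`. -/
def PairwiseStable {n : ℕ} (C : Fin n → Fin n → ℝ) (x : Fin n → Fin n → Bool) : Prop :=
  (∀ i j, i ≠ j → x i j = true → C i j < 0 ∧ C j i < 0) ∧
  (∀ i j, i ≠ j → x i j = false → 0 ≤ C i j ∨ 0 ≤ C j i)

/-- The degree of node `i` in the graph `x`: the number of nodes `j ≠ i` linked to `i`. -/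
def deg {n : ℕ} (x : Fin n → Fin n → Bool) (i : Fin n) : ℕ :=
  (Finset.univ.filter fun j => j ≠ i ∧ x i j = true).card

/-!
Pairwise stability says exactly that `i` and `j` are linked iff both want the link,
`x i j = ψ i j && ψ j i`; the three inequalities are the standard linearization of a Boolean
`and`, and symmetry of `x` comes for free since `&&` is commutative.
-/

theorem deg_eq_sum_toNat {n : ℕ} (x : Fin n → Fin n → Bool) (i : Fin n) :
    deg x i = ∑ j ∈ Finset.univ.filter (· ≠ i), (x i j).toNat := by
  rw [deg, ← Finset.filter_filter, Finset.card_filter]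
  exact Finset.sum_congr rfl fun j _ => by cases x i j <;> rfl

theorem pairwiseStable_iff_eq_and {n : ℕ} {C : Fin n → Fin n → ℝ} {ψ : Fin n → Fin n → Bool}
    (hψ : ∀ i j, ψ i j = true ↔ C i j < 0) (x : Fin n → Fin n → Bool) :
    PairwiseStable C x ↔ ∀ i j, i ≠ j → x i j = (ψ i j && ψ j i) := by
  have hψ' : ∀ i j, 0 ≤ C i j ↔ ψ i j = false := by simp [← not_lt, ← hψ]
  simp only [PairwiseStable, ← hψ, hψ', ← forall_and]
  refine forall₂_congr fun i j => imp_congr_right fun _ => ?_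
  cases x i j <;> cases ψ i j <;> cases ψ j i <;> decide

theorem toNat_linear_constraints_iff (a b c : Bool) :
    ((b.toNat : ℤ) + c.toNat - 1 ≤ a.toNat ∧ (a.toNat : ℤ) ≤ b.toNat ∧ (a.toNat : ℤ) ≤ c.toNat) ↔
      a = (b && c) := by
  cases a <;> cases b <;> cases c <;> decide

theorem stability_degree_constraints_general (n : ℕ) (C : Fin n → Fin n → ℝ)
    (ψ : Fin n → Fin n → Bool) (hψ : ∀ i j, ψ i j = true ↔ C i j < 0)
    (k : Fin n → ℕ) (x : Fin n → Fin n → Bool) :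
    (PairwiseStable C x ∧ ∀ i, deg x i = k i) ↔
      ((∀ i j : Fin n, i ≠ j →
          ((ψ i j).toNat : ℤ) + ((ψ j i).toNat : ℤ) - 1 ≤ ((x i j).toNat : ℤ) ∧
          ((x i j).toNat : ℤ) ≤ ((ψ i j).toNat : ℤ) ∧
          ((x i j).toNat : ℤ) ≤ ((ψ j i).toNat : ℤ) ∧
          x i j = x j i) ∧
        ∀ i : Fin n, ∑ j ∈ Finset.univ.filter (fun j => j ≠ i), (x i j).toNat = k i) := by
  simp only [pairwiseStable_iff_eq_and hψ, deg_eq_sum_toNat]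
  refine and_congr_left' ⟨fun hstab i j hij => ?_, fun hcons i j hij => ?_⟩
  · obtain ⟨h₁, h₂, h₃⟩ := (toNat_linear_constraints_iff _ _ _).2 (hstab i j hij)
    exact ⟨h₁, h₂, h₃, by rw [hstab i j hij, hstab j i hij.symm, Bool.and_comm]⟩
  · obtain ⟨h₁, h₂, h₃, -⟩ := hcons i j hij
    exact (toNat_linear_constraints_iff _ _ _).1 ⟨h₁, h₂, h₃⟩

theorem stability_degree_constraints (n : ℕ) (C : Fin n → Fin n → ℝ)
    (ψ : Fin n → Fin n → Bool) (hψ : ∀ i j, ψ i j = true ↔ C i j < 0)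
    (k : Fin n → ℕ) (x : Fin n → Fin n → Bool) (hx : IsGraph x) :
    (PairwiseStable C x ∧ ∀ i, deg x i = k i) ↔
      ((∀ i j : Fin n, i ≠ j →
          ((ψ i j).toNat : ℤ) + ((ψ j i).toNat : ℤ) - 1 ≤ ((x i j).toNat : ℤ) ∧
          ((x i j).toNat : ℤ) ≤ ((ψ i j).toNat : ℤ) ∧
          ((x i j).toNat : ℤ) ≤ ((ψ j i).toNat : ℤ) ∧
          x i j = x j i) ∧
        ∀ i : Fin n, ∑ j ∈ Finset.univ.filter (fun j => j ≠ i), (x i j).toNat = k i) :=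
  stability_degree_constraints_general n C ψ hψ k x
end

section
/- Let n be a natural number and k : Fin n → ℕ a target degree sequence. Suppose the pair (x*, ψ*) of Boolean matrices (x*, ψ* : Fin n → Fin n → Bool, with x* symmetric and irreflexive) minimizes Σ_i |deg_i(x) − k i| over all pairs (x, ψ) satisfying, for all i ≠ j (reading true as 1, false as 0): (ψ i j) + (ψ j i) − 1 ≤ x i j, x i j ≤ ψ i j, x i j ≤ ψ j i, and x i j = x j i, where deg_i(x) is the number of j ≠ i with x i j = true. Define the cost matrix C* by C* i j = −1 if ψ* i j = true and C* i j = 1 otherwise. Then x* is pairwise stable with respect to C*, and for every cost matrix C and every graph x on n nodes that is pairwise stable with respect to C, Σ_i |deg_i(x) − k i| ≥ Σ_i |deg_i(x*) − k i|. -/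
/-- The stability constraints of the integer program, for a pair `(x, ψ)`. -/
def Feasible {n : ℕ} (x ψ : Fin n → Fin n → Bool) : Prop :=
  ∀ i j : Fin n, i ≠ j →
    ((ψ i j).toNat : ℤ) + ((ψ j i).toNat : ℤ) - 1 ≤ ((x i j).toNat : ℤ) ∧
    ((x i j).toNat : ℤ) ≤ ((ψ i j).toNat : ℤ) ∧
    ((x i j).toNat : ℤ) ≤ ((ψ j i).toNat : ℤ) ∧
    x i j = x j i

/-! The constraints of the integer program say exactly that `x i j = ψ i j && ψ j i` off the
diagonal, and pairwise stability with respect to `C` says the same with `ψ i j := C i j < 0`.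
So the stable graphs are precisely the `x`-parts of feasible pairs, which the optimum bounds,
and `C*` has sign pattern `ψ*`, which makes `x*` stable. -/

section Stability

variable {n : ℕ}

theorem feasible_iff {x ψ : Fin n → Fin n → Bool} :
    Feasible x ψ ↔ ∀ i j, i ≠ j → x i j = (ψ i j && ψ j i) := by
  constructor
  · intro h i j hij
    obtain ⟨hlow, hij_le, hji_le, -⟩ := h i j hij
    revert hlow hij_le hji_le
    cases x i j <;> cases ψ i j <;> cases ψ j i <;> decide
  · intro h i j hij
    have hsymm : x i j = x j i := by rw [h i j hij, h j i hij.symm, Bool.and_comm]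
    refine ⟨?_, ?_, ?_, hsymm⟩ <;> rw [h i j hij] <;>
      cases ψ i j <;> cases ψ j i <;> decide

theorem pairwiseStable_iff {C : Fin n → Fin n → ℝ} {x : Fin n → Fin n → Bool} :
    PairwiseStable C x ↔
      ∀ i j, i ≠ j → x i j = (decide (C i j < 0) && decide (C j i < 0)) := by
  constructor
  · rintro ⟨hlinked, hunlinked⟩ i j hij
    cases hx : x i j
    · rcases hunlinked i j hij hx with h | h <;> simp [not_lt.mpr h]
    · simp [hlinked i j hij hx]
  · intro h
    refine ⟨fun i j hij hx => ?_, fun i j hij hx => ?_⟩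
    · simpa [hx] using h i j hij
    · by_contra! hboth
      simpa [hx, hboth.1, hboth.2] using h i j hij

theorem pairwiseStable_iff_feasible {C : Fin n → Fin n → ℝ} {x : Fin n → Fin n → Bool} :
    PairwiseStable C x ↔ Feasible x (fun i j => decide (C i j < 0)) := by
  rw [pairwiseStable_iff, feasible_iff]

end Stability

theorem optimal_cost_matrix_general (n : ℕ) (k : Fin n → ℕ)
    (xstar ψstar : Fin n → Fin n → Bool)
    (hfeas : Feasible xstar ψstar)
    (hmin : ∀ x ψ : Fin n → Fin n → Bool, Feasible x ψ →
      ∑ i, |(deg x i : ℤ) - (k i : ℤ)| ≥ ∑ i, |(deg xstar i : ℤ) - (k i : ℤ)|)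
    (Cstar : Fin n → Fin n → ℝ)
    (hC : ∀ i j, Cstar i j = if ψstar i j = true then -1 else 1) :
    PairwiseStable Cstar xstar ∧
      ∀ (C : Fin n → Fin n → ℝ) (x : Fin n → Fin n → Bool),
        IsGraph x → PairwiseStable C x →
        ∑ i, |(deg x i : ℤ) - (k i : ℤ)| ≥ ∑ i, |(deg xstar i : ℤ) - (k i : ℤ)| := by
  have hwish : (fun i j => decide (Cstar i j < 0)) = ψstar := by
    funext i j
    rw [hC]
    cases ψstar i j <;> norm_num
  refine ⟨pairwiseStable_iff_feasible.mpr (hwish ▸ hfeas), fun C x _ hstable => ?_⟩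
  exact hmin x _ (pairwiseStable_iff_feasible.mp hstable)

theorem optimal_cost_matrix (n : ℕ) (k : Fin n → ℕ)
    (xstar ψstar : Fin n → Fin n → Bool)
    (hgraph : IsGraph xstar)
    (hfeas : Feasible xstar ψstar)
    (hmin : ∀ x ψ : Fin n → Fin n → Bool, Feasible x ψ →
      ∑ i, |(deg x i : ℤ) - (k i : ℤ)| ≥ ∑ i, |(deg xstar i : ℤ) - (k i : ℤ)|)
    (Cstar : Fin n → Fin n → ℝ)
    (hC : ∀ i j, Cstar i j = if ψstar i j = true then -1 else 1) :
    PairwiseStable Cstar xstar ∧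
      ∀ (C : Fin n → Fin n → ℝ) (x : Fin n → Fin n → Bool),
        IsGraph x → PairwiseStable C x →
        ∑ i, |(deg x i : ℤ) - (k i : ℤ)| ≥ ∑ i, |(deg xstar i : ℤ) - (k i : ℤ)| :=
  optimal_cost_matrix_general n k xstar ψstar hfeas hmin Cstar hC
end
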